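/- arXiv:1401.3630 — 2 statements merged into one kernel-verified Lean document; each statement's English description precedes it below -/
import Mathlib

section
/- Vertical rotations are relative equilibria of the ellipsoid on a smooth plane: for every p ∈ ℝ and ε ∈ {+1, −1}, the constant curves M(t) ≡ (0, 0, p), γ(t) ≡ (0, 0, ε) solve the Euler–Poisson equations on e(3)* with the Hamiltonian H of the ellipsoid of revolution on a smooth plane; equivalently, at these points M × ∂H/∂M + γ × ∂H/∂γ = 0 and γ × ∂H/∂M = 0. -/
/-! The Hamiltonian is invariant under the half-turn `ρ` about the symmetry axis (the reflection
in the line `ℝ e₃`) applied to `M` and `γ` simultaneously: `ρ` commutes with `B` and `I` and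
preserves cross and inner products, so it transports `r`, `a` and `A` equivariantly. At a vertical
point `M` and `γ` are fixed by `ρ`; as `ρ` is an isometry, each partial gradient of `H` there is
fixed by `ρ` too, i.e. vertical, and every cross product in the Euler–Poisson equations is a
product of parallel vectors. -/

open scoped RealInnerProductSpace

noncomputable section

/-- ℝ³ with the standard inner product. -/
abbrev E3 : Type := EuclideanSpace ℝ (Fin 3)

/-- The vector (x, y, z) ∈ ℝ³. -/
def vec3 (x y z : ℝ) : E3 := (EuclideanSpace.equiv (Fin 3) ℝ).symm ![x, y, z]

/-- The cross product in ℝ³. -/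
def cross3 (x y : E3) : E3 :=
  vec3 (x 1 * y 2 - x 2 * y 1) (x 2 * y 0 - x 0 * y 2) (x 0 * y 1 - x 1 * y 0)

/-- The diagonal operator diag(c₁, c₁, c₃) acting on ℝ³. -/
def diagOp (c1 c3 : ℝ) (x : E3) : E3 := vec3 (c1 * x 0) (c1 * x 1) (c3 * x 2)

/-- The vector r(γ) = −Bγ/√⟨γ, Bγ⟩, where B = diag(b₁², b₁², b₃²). -/
def rvec (b1 b3 : ℝ) (γ : E3) : E3 :=
  (-(Real.sqrt ⟪γ, diagOp (b1 ^ 2) (b3 ^ 2) γ⟫)⁻¹) • diagOp (b1 ^ 2) (b3 ^ 2) γ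

/-- a(γ) = γ × r(γ). -/
def avec (b1 b3 : ℝ) (γ : E3) : E3 := cross3 γ (rvec b1 b3 γ)

/-- The inertia matrix I = diag(I₁, I₁, I₃). -/
def Imat (I1 I3 : ℝ) : Matrix (Fin 3) (Fin 3) ℝ := Matrix.diagonal ![I1, I1, I3]

/-- A 3×3 matrix acting on ℝ³. -/
def mulVecE (A : Matrix (Fin 3) (Fin 3) ℝ) (x : E3) : E3 :=
  (EuclideanSpace.equiv (Fin 3) ℝ).symm (A.mulVec ((EuclideanSpace.equiv (Fin 3) ℝ) x))

/-- The matrix A(γ) = (I + m a(γ)⊗a(γ))⁻¹,  where (a⊗a)x = ⟨a, x⟩a. -/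
def Amat (b1 b3 I1 I3 m : ℝ) (γ : E3) : Matrix (Fin 3) (Fin 3) ℝ :=
  (Imat I1 I3 + m • Matrix.vecMulVec ((EuclideanSpace.equiv (Fin 3) ℝ) (avec b1 b3 γ))
      ((EuclideanSpace.equiv (Fin 3) ℝ) (avec b1 b3 γ)))⁻¹

/-- The Hamiltonian of the ellipsoid of revolution rolling on a smooth plane:
H(M, γ) = ½⟨I A(γ)M, A(γ)M⟩ + ½⟨a(γ), A(γ)M⟩² − m g ⟨r(γ), γ⟩. -/
def Ham (b1 b3 I1 I3 m g : ℝ) (M γ : E3) : ℝ :=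
  (1 / 2) * ⟪mulVecE (Imat I1 I3) (mulVecE (Amat b1 b3 I1 I3 m γ) M),
      mulVecE (Amat b1 b3 I1 I3 m γ) M⟫
  + (1 / 2) * ⟪avec b1 b3 γ, mulVecE (Amat b1 b3 I1 I3 m γ) M⟫ ^ 2
  - m * g * ⟪rvec b1 b3 γ, γ⟫

/-- The gradient of H in the M-variable, ∂H/∂M. -/
def gradM (H : E3 → E3 → ℝ) (M γ : E3) : E3 := gradient (fun M' => H M' γ) M

/-- The gradient of H in the γ-variable, ∂H/∂γ. -/
def gradG (H : E3 → E3 → ℝ) (M γ : E3) : E3 := gradient (fun γ' => H M γ') γ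

/-- The differentiable curves (M, γ) solve the Euler–Poisson equations on e(3)* with
Hamiltonian H:  Ṁ = M × ∂H/∂M + γ × ∂H/∂γ,  γ̇ = γ × ∂H/∂M. -/
def EulerPoisson (H : E3 → E3 → ℝ) (M γ : ℝ → E3) : Prop :=
  Differentiable ℝ M ∧ Differentiable ℝ γ ∧
  (∀ t, deriv M t =
      cross3 (M t) (gradM H (M t) (γ t)) + cross3 (γ t) (gradG H (M t) (γ t))) ∧
  (∀ t, deriv γ t = cross3 (γ t) (gradM H (M t) (γ t)))

theorem LinearIsometryEquiv.map_gradient_eq_self_of_invariant {F : Type*} [NormedAddCommGroup F]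
    [InnerProductSpace ℝ F] [CompleteSpace F] (L : F ≃ₗᵢ[ℝ] F) {f : F → ℝ}
    (hf : ∀ y, f (L y) = f y) {x : F} (hx : L x = x) :
    L (gradient f x) = gradient f x := by
  have hfL : fderiv ℝ f x = (fderiv ℝ f x).comp (L : F →L[ℝ] F) := by
    have h := L.toContinuousLinearEquiv.comp_right_fderiv (f := f) (x := x)
    rwa [show f ∘ L.toContinuousLinearEquiv = f from funext hf, L.coe_toContinuousLinearEquiv,
      hx] at h
  refine ext_inner_right ℝ fun v => ?_
  obtain ⟨w, rfl⟩ := L.surjective v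
  rw [L.inner_map_map, inner_gradient_left, inner_gradient_left]
  exact DFunLike.congr_fun hfL w

theorem Submodule.gradient_mem_of_reflection_invariant {F : Type*} [NormedAddCommGroup F]
    [InnerProductSpace ℝ F] [CompleteSpace F] (K : Submodule ℝ F) [K.HasOrthogonalProjection]
    {f : F → ℝ} (hf : ∀ y, f (K.reflection y) = f y) {x : F} (hx : x ∈ K) :
    gradient f x ∈ K :=
  (K.reflection_eq_self_iff _).mp <|
    K.reflection.map_gradient_eq_self_of_invariant hf (K.reflection_mem_subspace_eq_self hx)

theorem vec3_apply (x y z : ℝ) (i : Fin 3) : vec3 x y z i = ![x, y, z] i := rfl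

theorem E3.ext {x y : E3} (h0 : x 0 = y 0) (h1 : x 1 = y 1) (h2 : x 2 = y 2) : x = y :=
  PiLp.ext fun i => by fin_cases i <;> assumption

theorem inner_vec3_left (a b c : ℝ) (x : E3) :
    ⟪vec3 a b c, x⟫ = a * x 0 + b * x 1 + c * x 2 := by
  simp [PiLp.inner_apply, Fin.sum_univ_three, vec3_apply, mul_comm]

def zAxis : Submodule ℝ E3 := ℝ ∙ vec3 0 0 1

theorem vec3_mem_zAxis (c : ℝ) : vec3 0 0 c ∈ zAxis :=
  Submodule.mem_span_singleton.mpr ⟨c, by refine E3.ext ?_ ?_ ?_ <;> simp [vec3_apply]⟩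

theorem cross3_eq_zero_of_mem_zAxis {x y : E3} (hx : x ∈ zAxis) (hy : y ∈ zAxis) :
    cross3 x y = 0 := by
  obtain ⟨a, rfl⟩ := Submodule.mem_span_singleton.mp hx
  obtain ⟨b, rfl⟩ := Submodule.mem_span_singleton.mp hy
  refine E3.ext ?_ ?_ ?_ <;> simp [cross3, vec3_apply]

theorem reflection_zAxis_apply (x : E3) :
    zAxis.reflection x = vec3 (-x 0) (-x 1) (x 2) := by
  have hn : ‖vec3 0 0 1‖ = 1 := by
    rw [norm_eq_sqrt_real_inner, inner_vec3_left]
    simp [vec3_apply]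
  rw [zAxis, Submodule.reflection_singleton_apply, inner_vec3_left, hn]
  refine E3.ext ?_ ?_ ?_ <;> simp [vec3_apply, two_mul]

theorem diagOp_reflection_zAxis (c1 c3 : ℝ) (x : E3) :
    diagOp c1 c3 (zAxis.reflection x) = zAxis.reflection (diagOp c1 c3 x) := by
  refine E3.ext ?_ ?_ ?_ <;> simp [diagOp, reflection_zAxis_apply, vec3_apply]

theorem cross3_reflection_zAxis (x y : E3) :
    cross3 (zAxis.reflection x) (zAxis.reflection y) = zAxis.reflection (cross3 x y) := by
  refine E3.ext ?_ ?_ ?_ <;> simp [cross3, reflection_zAxis_apply, vec3_apply] <;> ring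

theorem rvec_reflection_zAxis (b1 b3 : ℝ) (γ : E3) :
    rvec b1 b3 (zAxis.reflection γ) = zAxis.reflection (rvec b1 b3 γ) := by
  rw [rvec, rvec, diagOp_reflection_zAxis, LinearIsometryEquiv.inner_map_map, map_smul]

theorem avec_reflection_zAxis (b1 b3 : ℝ) (γ : E3) :
    avec b1 b3 (zAxis.reflection γ) = zAxis.reflection (avec b1 b3 γ) := by
  rw [avec, avec, rvec_reflection_zAxis, cross3_reflection_zAxis]

def halfTurnMatrix : Matrix (Fin 3) (Fin 3) ℝ := Matrix.diagonal ![-1, -1, 1]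

theorem halfTurnMatrix_mul_self : halfTurnMatrix * halfTurnMatrix = 1 := by
  rw [halfTurnMatrix, Matrix.diagonal_mul_diagonal, ← Matrix.diagonal_one]
  congr 1
  ext i
  fin_cases i <;> simp

theorem Imat_commute_halfTurnMatrix (I1 I3 : ℝ) : Commute (Imat I1 I3) halfTurnMatrix :=
  Matrix.commute_diagonal _ _

theorem halfTurnMatrix_mul_Imat_add_vecMulVec_mul (I1 I3 m : ℝ) (u : Fin 3 → ℝ) :
    halfTurnMatrix * (Imat I1 I3 + m • Matrix.vecMulVec u u) * halfTurnMatrix =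
      Imat I1 I3 + m • Matrix.vecMulVec (halfTurnMatrix.mulVec u) (halfTurnMatrix.mulVec u) := by
  have hI : halfTurnMatrix * Imat I1 I3 * halfTurnMatrix = Imat I1 I3 := by
    rw [← (Imat_commute_halfTurnMatrix I1 I3).eq, Matrix.mul_assoc, halfTurnMatrix_mul_self,
      Matrix.mul_one]
  have huu : Matrix.vecMulVec (halfTurnMatrix.mulVec u) (halfTurnMatrix.mulVec u) =
      halfTurnMatrix * Matrix.vecMulVec u u * halfTurnMatrix := by
    rw [Matrix.mul_vecMulVec, Matrix.vecMulVec_mul, ← Matrix.mulVec_transpose, halfTurnMatrix,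
      Matrix.diagonal_transpose]
  rw [Matrix.mul_add, Matrix.add_mul, hI, huu, Matrix.mul_smul, Matrix.smul_mul]

theorem equiv_mulVecE (A : Matrix (Fin 3) (Fin 3) ℝ) (x : E3) :
    EuclideanSpace.equiv (Fin 3) ℝ (mulVecE A x) = A.mulVec (EuclideanSpace.equiv (Fin 3) ℝ x) :=
  rfl

theorem mulVecE_mul (A B : Matrix (Fin 3) (Fin 3) ℝ) (x : E3) :
    mulVecE (A * B) x = mulVecE A (mulVecE B x) := by
  simp only [mulVecE, ← Matrix.mulVec_mulVec]
  rfl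

theorem mulVecE_halfTurnMatrix (x : E3) : mulVecE halfTurnMatrix x = zAxis.reflection x := by
  refine E3.ext ?_ ?_ ?_ <;>
    simp [mulVecE, halfTurnMatrix, reflection_zAxis_apply, vec3_apply, Matrix.mulVec_diagonal]

theorem mulVecE_reflection_zAxis {A : Matrix (Fin 3) (Fin 3) ℝ} (hA : Commute A halfTurnMatrix)
    (x : E3) : mulVecE A (zAxis.reflection x) = zAxis.reflection (mulVecE A x) := by
  rw [← mulVecE_halfTurnMatrix, ← mulVecE_halfTurnMatrix, ← mulVecE_mul, ← mulVecE_mul, hA.eq]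

theorem Amat_reflection_zAxis (b1 b3 I1 I3 m : ℝ) (γ : E3) :
    Amat b1 b3 I1 I3 m (zAxis.reflection γ) =
      halfTurnMatrix * Amat b1 b3 I1 I3 m γ * halfTurnMatrix := by
  have hQ : halfTurnMatrix⁻¹ = halfTurnMatrix := Matrix.inv_eq_left_inv halfTurnMatrix_mul_self
  rw [Amat, Amat, avec_reflection_zAxis, ← mulVecE_halfTurnMatrix, equiv_mulVecE,
    ← halfTurnMatrix_mul_Imat_add_vecMulVec_mul, Matrix.mul_inv_rev, Matrix.mul_inv_rev, hQ,
    Matrix.mul_assoc]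

theorem mulVecE_Amat_reflection_zAxis (b1 b3 I1 I3 m : ℝ) (M γ : E3) :
    mulVecE (Amat b1 b3 I1 I3 m (zAxis.reflection γ)) (zAxis.reflection M) =
      zAxis.reflection (mulVecE (Amat b1 b3 I1 I3 m γ) M) := by
  rw [Amat_reflection_zAxis, mulVecE_mul, mulVecE_mul, mulVecE_halfTurnMatrix,
    mulVecE_halfTurnMatrix, Submodule.reflection_reflection]

theorem Ham_reflection_zAxis (b1 b3 I1 I3 m g : ℝ) (M γ : E3) :
    Ham b1 b3 I1 I3 m g (zAxis.reflection M) (zAxis.reflection γ) = Ham b1 b3 I1 I3 m g M γ := by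
  simp only [Ham, mulVecE_Amat_reflection_zAxis,
    mulVecE_reflection_zAxis (Imat_commute_halfTurnMatrix I1 I3), avec_reflection_zAxis,
    rvec_reflection_zAxis, LinearIsometryEquiv.inner_map_map]

theorem gradM_Ham_mem_zAxis (b1 b3 I1 I3 m g : ℝ) {M γ : E3} (hM : M ∈ zAxis)
    (hγ : γ ∈ zAxis) : gradM (Ham b1 b3 I1 I3 m g) M γ ∈ zAxis := by
  refine zAxis.gradient_mem_of_reflection_invariant (fun M' => ?_) hM
  conv_lhs => rw [← zAxis.reflection_mem_subspace_eq_self hγ]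
  exact Ham_reflection_zAxis b1 b3 I1 I3 m g M' γ

theorem gradG_Ham_mem_zAxis (b1 b3 I1 I3 m g : ℝ) {M γ : E3} (hM : M ∈ zAxis)
    (hγ : γ ∈ zAxis) : gradG (Ham b1 b3 I1 I3 m g) M γ ∈ zAxis := by
  refine zAxis.gradient_mem_of_reflection_invariant (fun γ' => ?_) hγ
  conv_lhs => rw [← zAxis.reflection_mem_subspace_eq_self hM]
  exact Ham_reflection_zAxis b1 b3 I1 I3 m g M γ'

theorem vertical_rotations_are_equilibria_general (b1 b3 I1 I3 m g : ℝ)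
    (p ε : ℝ) :
    EulerPoisson (Ham b1 b3 I1 I3 m g) (fun _ => vec3 0 0 p) (fun _ => vec3 0 0 ε) ∧
    cross3 (vec3 0 0 p) (gradM (Ham b1 b3 I1 I3 m g) (vec3 0 0 p) (vec3 0 0 ε))
      + cross3 (vec3 0 0 ε) (gradG (Ham b1 b3 I1 I3 m g) (vec3 0 0 p) (vec3 0 0 ε)) = 0 ∧
    cross3 (vec3 0 0 ε) (gradM (Ham b1 b3 I1 I3 m g) (vec3 0 0 p) (vec3 0 0 ε)) = 0 := by
  have hM := vec3_mem_zAxis p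
  have hγ := vec3_mem_zAxis ε
  have hgradM := gradM_Ham_mem_zAxis b1 b3 I1 I3 m g hM hγ
  have hgradG := gradG_Ham_mem_zAxis b1 b3 I1 I3 m g hM hγ
  have hMM := cross3_eq_zero_of_mem_zAxis hM hgradM
  have hγG := cross3_eq_zero_of_mem_zAxis hγ hgradG
  have hγM := cross3_eq_zero_of_mem_zAxis hγ hgradM
  refine ⟨⟨differentiable_const _, differentiable_const _, fun _ => ?_, fun _ => ?_⟩, ?_, hγM⟩
  all_goals simp only [deriv_const, hMM, hγG, hγM, add_zero]

/-- vertical rotations are relative equilibria of the ellipsoid on a smooth plane: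
for M = (0,0,p), γ = (0,0,±1), the constant curves solve the Euler–Poisson equations with the
Hamiltonian H of the ellipsoid on a smooth plane; equivalently, at these points
M × ∂H/∂M + γ × ∂H/∂γ = 0 and γ × ∂H/∂M = 0. -/
theorem vertical_rotations_are_equilibria (b1 b3 I1 I3 m g : ℝ)
    (hb1 : 0 < b1) (hb3 : 0 < b3) (hI1 : 0 < I1) (hI3 : 0 < I3) (hm : 0 < m) (hg : 0 < g)
    (p ε : ℝ) (hε : ε = 1 ∨ ε = -1) :
    EulerPoisson (Ham b1 b3 I1 I3 m g) (fun _ => vec3 0 0 p) (fun _ => vec3 0 0 ε) ∧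
    cross3 (vec3 0 0 p) (gradM (Ham b1 b3 I1 I3 m g) (vec3 0 0 p) (vec3 0 0 ε))
      + cross3 (vec3 0 0 ε) (gradG (Ham b1 b3 I1 I3 m g) (vec3 0 0 p) (vec3 0 0 ε)) = 0 ∧
    cross3 (vec3 0 0 ε) (gradM (Ham b1 b3 I1 I3 m g) (vec3 0 0 p) (vec3 0 0 ε)) = 0 :=
  vertical_rotations_are_equilibria_general b1 b3 I1 I3 m g p ε
end
end

section
/- Second derivative of γ₃ at the vertical position: let b₁, b₃, I₁, I₃ > 0, m ≥ 0, B = diag(b₁², b₁², b₃²), I = diag(I₁, I₁, I₃). Let ω : ℝ → ℝ³ be differentiable and γ : ℝ → ℝ³ satisfy γ̇(t) = γ(t) × ω(t) with γ(t) ≠ 0, and set r(t) = −Bγ(t)/√⟨γ(t), Bγ(t)⟩ and M(t) = I ω(t) + m r(t) × (ω(t) × r(t)). If at some time t₀ one has γ(t₀) = (0, 0, ε) with ε ∈ {+1, −1}, then the second derivative of the third component γ₃ at t₀ equals −ε (M₁(t₀)² + M₂(t₀)²)/(I₁ + m b₃²)². -/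
open scoped RealInnerProductSpace

noncomputable section

/-- The angular momentum w.r.t. the contact point: M = I ω + m r × (ω × r) with
I = diag(I₁, I₁, I₃) and r = r(γ). -/
def Mmom (b1 b3 I1 I3 m : ℝ) (γ ω : E3) : E3 :=
  diagOp I1 I3 ω + m • cross3 (rvec b1 b3 γ) (cross3 ω (rvec b1 b3 γ))

/-- The differentiable curves (γ, ω), with γ of unit length, solve the nonholonomic rolling
system:  Ṁ = M × ω − m ṙ × (ω × r) + m g r × γ,  γ̇ = γ × ω,  where r = r(γ) and
M = I ω + m r × (ω × r). -/
def NonholonomicRolling (b1 b3 I1 I3 m g : ℝ) (γ ω : ℝ → E3) : Prop :=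
  Differentiable ℝ γ ∧ Differentiable ℝ ω ∧ (∀ t, ‖γ t‖ = 1) ∧
  (∀ t, deriv (fun s => Mmom b1 b3 I1 I3 m (γ s) (ω s)) t =
      cross3 (Mmom b1 b3 I1 I3 m (γ t) (ω t)) (ω t)
      - m • cross3 (deriv (fun s => rvec b1 b3 (γ s)) t) (cross3 (ω t) (rvec b1 b3 (γ t)))
      + (m * g) • cross3 (rvec b1 b3 (γ t)) (γ t)) ∧
  (∀ t, deriv γ t = cross3 (γ t) (ω t))

/-!
Differentiating `γ̇₃ = γ₁ ω₂ - γ₂ ω₁` once more and using `γ₁ = γ₂ = 0` at the vertical position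
leaves `γ̈₃ = γ̇₁ ω₂ - γ̇₂ ω₁ = -γ₃ (ω₁² + ω₂²)`. There `r = (0, 0, -b₃ ε)` is parallel to the
symmetry axis, so `r × (ω × r)` has horizontal part `b₃² (ω₁, ω₂)` and the horizontal part of `M`
is `(I₁ + m b₃²) (ω₁, ω₂)`.
-/

@[simp] lemma vec3_apply_zero (x y z : ℝ) : vec3 x y z 0 = x := rfl
@[simp] lemma vec3_apply_one (x y z : ℝ) : vec3 x y z 1 = y := rfl
@[simp] lemma vec3_apply_two (x y z : ℝ) : vec3 x y z 2 = z := rfl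

lemma smul_vec3 (c x y z : ℝ) : c • vec3 x y z = vec3 (c * x) (c * y) (c * z) := by
  ext i
  fin_cases i <;> rfl

lemma HasDerivAt.euclideanSpace_apply {ι : Type*} [Fintype ι] {f : ℝ → EuclideanSpace ℝ ι}
    {f' : EuclideanSpace ℝ ι} {t : ℝ} (hf : HasDerivAt f f' t) (i : ι) :
    HasDerivAt (fun s => f s i) (f' i) t :=
  (EuclideanSpace.proj (𝕜 := ℝ) i).hasFDerivAt.comp_hasDerivAt t hf

section Kinematics

variable {γ ω : ℝ → E3} (hγd : Differentiable ℝ γ) (hγeq : ∀ t, deriv γ t = cross3 (γ t) (ω t))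
include hγd hγeq

lemma hasDerivAt_apply_of_deriv_eq_cross3 (t : ℝ) (i : Fin 3) :
    HasDerivAt (fun s => γ s i) (cross3 (γ t) (ω t) i) t :=
  hγeq t ▸ (hγd t).hasDerivAt.euclideanSpace_apply i

lemma deriv_apply_two_of_deriv_eq_cross3 :
    (deriv fun t => γ t 2) = fun t => γ t 0 * ω t 1 - γ t 1 * ω t 0 :=
  funext fun t => (hasDerivAt_apply_of_deriv_eq_cross3 hγd hγeq t 2).deriv

lemma deriv_deriv_apply_two_of_deriv_eq_cross3 (hωd : Differentiable ℝ ω) {t : ℝ}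
    (h0 : γ t 0 = 0) (h1 : γ t 1 = 0) :
    deriv (deriv fun t => γ t 2) t = -γ t 2 * (ω t 0 ^ 2 + ω t 1 ^ 2) := by
  have hγ0 := hasDerivAt_apply_of_deriv_eq_cross3 hγd hγeq t 0
  have hγ1 := hasDerivAt_apply_of_deriv_eq_cross3 hγd hγeq t 1
  have hω0 := (hωd t).hasDerivAt.euclideanSpace_apply 0
  have hω1 := (hωd t).hasDerivAt.euclideanSpace_apply 1
  have hγ₃_dot : HasDerivAt (fun t => γ t 0 * ω t 1 - γ t 1 * ω t 0)
      (cross3 (γ t) (ω t) 0 * ω t 1 + γ t 0 * deriv ω t 1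
        - (cross3 (γ t) (ω t) 1 * ω t 0 + γ t 1 * deriv ω t 0)) t :=
    (hγ0.mul hω1).sub (hγ1.mul hω0)
  rw [deriv_apply_two_of_deriv_eq_cross3 hγd hγeq, hγ₃_dot.deriv]
  simp only [cross3, vec3_apply_zero, vec3_apply_one, h0, h1]
  ring

end Kinematics

lemma cross3_vertical_cross3_vertical_apply_zero (c : ℝ) (ω : E3) :
    cross3 (vec3 0 0 c) (cross3 ω (vec3 0 0 c)) 0 = c ^ 2 * ω 0 := by
  simp only [cross3, vec3_apply_zero, vec3_apply_one, vec3_apply_two]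
  ring

lemma cross3_vertical_cross3_vertical_apply_one (c : ℝ) (ω : E3) :
    cross3 (vec3 0 0 c) (cross3 ω (vec3 0 0 c)) 1 = c ^ 2 * ω 1 := by
  simp only [cross3, vec3_apply_zero, vec3_apply_one, vec3_apply_two]
  ring

lemma rvec_vertical {b1 b3 ε : ℝ} (hb3 : 0 < b3) (hε : ε ^ 2 = 1) :
    rvec b1 b3 (vec3 0 0 ε) = vec3 0 0 (-(b3 * ε)) := by
  have hinner : ⟪vec3 0 0 ε, diagOp (b1 ^ 2) (b3 ^ 2) (vec3 0 0 ε)⟫ = b3 ^ 2 := by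
    simp only [diagOp, vec3_apply_zero, vec3_apply_one, vec3_apply_two, PiLp.inner_apply,
      RCLike.inner_apply, Real.ringHom_apply, Fin.sum_univ_three]
    linear_combination b3 ^ 2 * hε
  rw [rvec, hinner, Real.sqrt_sq hb3.le, diagOp, smul_vec3]
  simp only [vec3_apply_zero, vec3_apply_one, vec3_apply_two, mul_zero]
  congr 1
  field_simp

lemma Mmom_vertical_apply_zero {b1 b3 I1 I3 m ε : ℝ} (hb3 : 0 < b3) (hε : ε ^ 2 = 1) (ω : E3) :
    Mmom b1 b3 I1 I3 m (vec3 0 0 ε) ω 0 = (I1 + m * b3 ^ 2) * ω 0 := by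
  simp only [Mmom, rvec_vertical hb3 hε, PiLp.add_apply, PiLp.smul_apply, smul_eq_mul,
    cross3_vertical_cross3_vertical_apply_zero, diagOp, vec3_apply_zero]
  linear_combination m * b3 ^ 2 * ω 0 * hε

lemma Mmom_vertical_apply_one {b1 b3 I1 I3 m ε : ℝ} (hb3 : 0 < b3) (hε : ε ^ 2 = 1) (ω : E3) :
    Mmom b1 b3 I1 I3 m (vec3 0 0 ε) ω 1 = (I1 + m * b3 ^ 2) * ω 1 := by
  simp only [Mmom, rvec_vertical hb3 hε, PiLp.add_apply, PiLp.smul_apply, smul_eq_mul,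
    cross3_vertical_cross3_vertical_apply_one, diagOp, vec3_apply_one]
  linear_combination m * b3 ^ 2 * ω 1 * hε

theorem second_derivative_at_vertical_general (b1 b3 I1 I3 m : ℝ)
    (hb3 : 0 < b3) (hI1 : 0 < I1) (hm : 0 ≤ m)
    (γ ω : ℝ → E3) (hγd : Differentiable ℝ γ) (hωd : Differentiable ℝ ω)
    (hγeq : ∀ t, deriv γ t = cross3 (γ t) (ω t))
    (t₀ ε : ℝ) (hε : ε = 1 ∨ ε = -1) (hγt₀ : γ t₀ = vec3 0 0 ε) :
    deriv (deriv fun t => γ t 2) t₀ =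
      -ε * ((Mmom b1 b3 I1 I3 m (γ t₀) (ω t₀) 0) ^ 2
            + (Mmom b1 b3 I1 I3 m (γ t₀) (ω t₀) 1) ^ 2) / (I1 + m * b3 ^ 2) ^ 2 := by
  have hε2 : ε ^ 2 = 1 := by rcases hε with rfl | rfl <;> norm_num
  have hI : I1 + m * b3 ^ 2 ≠ 0 := by positivity
  rw [deriv_deriv_apply_two_of_deriv_eq_cross3 hγd hγeq hωd (by simp [hγt₀]) (by simp [hγt₀]),
    hγt₀, Mmom_vertical_apply_zero hb3 hε2, Mmom_vertical_apply_one hb3 hε2, vec3_apply_two]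
  field_simp

/-- second derivative of γ₃ at the vertical position: if γ̇ = γ × ω with γ ≠ 0 and
γ(t₀) = (0, 0, ±1), then γ̈₃(t₀) = −ε (M₁(t₀)² + M₂(t₀)²)/(I₁ + m b₃²)², where
M = I ω + m r × (ω × r) and r = −Bγ/√⟨γ, Bγ⟩. -/
theorem second_derivative_at_vertical (b1 b3 I1 I3 m : ℝ)
    (hb1 : 0 < b1) (hb3 : 0 < b3) (hI1 : 0 < I1) (hI3 : 0 < I3) (hm : 0 ≤ m)
    (γ ω : ℝ → E3) (hγd : Differentiable ℝ γ) (hωd : Differentiable ℝ ω)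
    (hγne : ∀ t, γ t ≠ 0)
    (hγeq : ∀ t, deriv γ t = cross3 (γ t) (ω t))
    (t₀ ε : ℝ) (hε : ε = 1 ∨ ε = -1) (hγt₀ : γ t₀ = vec3 0 0 ε) :
    deriv (deriv fun t => γ t 2) t₀ =
      -ε * ((Mmom b1 b3 I1 I3 m (γ t₀) (ω t₀) 0) ^ 2
            + (Mmom b1 b3 I1 I3 m (γ t₀) (ω t₀) 1) ^ 2) / (I1 + m * b3 ^ 2) ^ 2 :=
  second_derivative_at_vertical_general b1 b3 I1 I3 m hb3 hI1 hm γ ω hγd hωd hγeq t₀ ε hε hγt₀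
end
end
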